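/- For even m ≥ 4, the quotient of the dihedral Artin–Tits group A_m = ⟨s, t | stst⋯ = tsts⋯ (both sides of length m)⟩ by its center is isomorphic to the free product ℤ/(m/2)ℤ * ℤ. -/

import Mathlib

/-!
Write `s, t` for the generators of `A_m` and `k = m / 2`. The braid relation reads
`(st)^k = (ts)^k`, and since `s (ts)^k = (st)^k s` this makes `Δ = (st)^k` central. Killing `Δ`
leaves `⟨s, t | (ts)^k = 1⟩`, which in the generators `x = ts` and `s` is
`⟨x, s | x^k = 1⟩ = ℤ/k * ℤ`. A free product of two nontrivial groups has trivial centre: a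
central element is fixed by conjugation, but conjugating a nonempty reduced word by a suitable
letter changes the factor of its first letter. As `Δ` is central and the quotient by it is
centreless, the centre of `A_m` is exactly the normal closure of `Δ`.
-/

/-- The alternating word s t s t ⋯ of given length in the free group. -/
def altWord {V : Type} : V → V → ℕ → FreeGroup V
  | _, _, 0 => 1
  | s, t, n + 1 => FreeGroup.of s * altWord t s n

/-- The Artin relations for an edge-labeling `m` (where `m s t = 0` or `1`
means no edge, and a label `m s t ≥ 2` imposes the braid relation). -/
def artinRels {V : Type} (m : V → V → ℕ) : Set (FreeGroup V) :=
  { r | ∃ s t : V, 2 ≤ m s t ∧ r = altWord s t (m s t) * (altWord t s (m s t))⁻¹ }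

/-- The Artin–Tits group of an edge-labeled graph, encoded by its labeling. -/
abbrev ArtinGroup {V : Type} (m : V → V → ℕ) : Type := PresentedGroup (artinRels m)

/-- The labeling of a single edge (on vertex set `Bool`) with label `m`. -/
def dihedralLabel (m : ℕ) : Bool → Bool → ℕ :=
  fun a b => if a = b then 0 else m

universe u

open Monoid Multiplicative

namespace Subgroup

variable {G H : Type*} [Group G] [Group H]

theorem center_eq_bot_of_mulEquiv (e : G ≃* H) (h : center H = ⊥) : center G = ⊥ := by
  refine eq_bot_iff.2 fun g hg => ?_
  have : e g ∈ center H := MulEquivClass.apply_mem_center e hg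
  rwa [h, mem_bot, map_eq_one_iff e e.injective] at this

theorem center_eq_of_le_of_center_quotient_eq_bot {N : Subgroup G} [N.Normal]
    (hN : N ≤ center G) (hQ : center (G ⧸ N) = ⊥) : center G = N := by
  refine le_antisymm (fun g hg => ?_) hN
  have : (g : G ⧸ N) ∈ center (G ⧸ N) := mem_center_iff.2 fun q =>
    QuotientGroup.induction_on q fun a => by
      rw [← QuotientGroup.mk_mul, ← QuotientGroup.mk_mul, mem_center_iff.1 hg a]
  rwa [hQ, mem_bot, QuotientGroup.eq_one_iff] at this

end Subgroup

namespace Monoid.CoprodI.NeWord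

variable {ι : Type*} {M : ι → Type*} [∀ i, Monoid (M i)]

theorem head_ne_one : ∀ {i j : ι} (w : NeWord M i j), w.head ≠ 1
  | _, _, singleton _ h => h
  | _, _, append w₁ _ _ => w₁.head_ne_one

theorem fstIdx_eq_of_prod_eq {i j i' j' : ι} (w : NeWord M i j) (w' : NeWord M i' j')
    (h : w.prod = w'.prod) : i = i' := by
  classical
  have hword : w.toWord = w'.toWord := Word.equiv.symm.injective h
  have := congrArg (fun v : Word M => v.toList.head?) hword
  simp only [toWord, toList_head?, Option.some.injEq] at this
  exact congrArg Sigma.fst this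

theorem prod_eq_of_head_or_exists_tail {i l : ι} (w : NeWord M i l) :
    (i = l ∧ w.prod = of w.head) ∨
      ∃ (i' : ι) (t : NeWord M i' l), i' ≠ i ∧ w.prod = of w.head * t.prod := by
  induction w with
  | singleton x hx => exact .inl ⟨rfl, prod_singleton x hx⟩
  | @append i j k l w₁ hjk w₂ ih₁ _ =>
    right
    rcases ih₁ with ⟨rfl, h₁⟩ | ⟨i', t, hi', h₁⟩
    · exact ⟨k, w₂, hjk.symm, by rw [append_prod, append_head, h₁]⟩
    · exact ⟨i', t.append hjk w₂, hi', by
        rw [append_prod, append_prod, append_head, h₁, mul_assoc]⟩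

end Monoid.CoprodI.NeWord

namespace Monoid.CoprodI

open NeWord

variable {ι : Type*} {G : ι → Type*} [∀ i, Group (G i)]

theorem center_eq_bot (hG : ∀ i, ∃ j, j ≠ i ∧ Nontrivial (G j)) :
    Subgroup.center (CoprodI G) = ⊥ := by
  classical
  refine eq_bot_iff.2 fun g hg => Subgroup.mem_bot.2 <| by_contra fun hg1 => ?_
  have hcomm : ∀ x, x * g = g * x := Subgroup.mem_center_iff.1 hg
  obtain ⟨i, l, w, hw⟩ :=
    NeWord.of_word (Word.equiv g) fun h => hg1 (Word.equiv.injective (h.trans rfl))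
  have hgw : w.prod = g := by rw [NeWord.prod, hw]; exact Word.equiv.symm_apply_apply g
  by_cases hil : i = l
  · -- `c g c⁻¹` is reduced as written and starts in the factor `j ≠ i`
    subst hil
    obtain ⟨j, hji, _⟩ := hG i
    obtain ⟨c, hc⟩ := exists_ne (1 : G j)
    let w' := ((singleton c hc).append hji w).append hji.symm (singleton c⁻¹ (inv_ne_one.2 hc))
    refine hji (w'.fstIdx_eq_of_prod_eq w ?_)
    simp only [w', append_prod, prod_singleton, hgw, hcomm, mul_assoc, ← map_mul,
      mul_inv_cancel, map_one, mul_one]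
  · -- conjugating `g = x t` by its first letter `x` gives the reduced word `t x`
    obtain ⟨i', t, hi', ht⟩ := w.prod_eq_of_head_or_exists_tail.resolve_left (hil ·.1)
    let w' := t.append (Ne.symm hil) (singleton w.head w.head_ne_one)
    refine hi' (w'.fstIdx_eq_of_prod_eq w ?_)
    have h := hcomm (of w.head)
    rw [← hgw, ht, mul_assoc] at h
    simpa only [w', append_prod, prod_singleton, ht] using (mul_left_cancel h).symm

end Monoid.CoprodI

namespace Monoid.Coprod

variable {H K : Type u} [Group H] [Group K]

instance (b : Bool) : Group (cond b H K) := by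
  cases b <;> assumption

variable (H K) in
def mulEquivCoprodI : Coprod H K ≃* CoprodI (fun b : Bool => cond b H K) :=
  MonoidHom.toMulEquiv
    (Coprod.lift (CoprodI.of (M := fun b : Bool => cond b H K) (i := true))
      (CoprodI.of (M := fun b : Bool => cond b H K) (i := false)))
    (CoprodI.lift fun | true => Coprod.inl | false => Coprod.inr)
    (by ext <;> simp)
    (by ext (_ | _) <;> simp)

theorem center_eq_bot [Nontrivial H] [Nontrivial K] : Subgroup.center (Coprod H K) = ⊥ :=
  Subgroup.center_eq_bot_of_mulEquiv (mulEquivCoprodI H K) <| CoprodI.center_eq_bot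
    fun
      | true => ⟨false, by decide, ‹Nontrivial K›⟩
      | false => ⟨true, by decide, ‹Nontrivial H›⟩

end Monoid.Coprod

theorem MonoidHom.ext_mzmod {n : ℕ} {M : Type*} [Monoid M]
    {f g : Multiplicative (ZMod n) →* M} (h : f (ofAdd 1) = g (ofAdd 1)) : f = g := by
  have hint : f.comp (Int.castAddHom (ZMod n)).toMultiplicative =
      g.comp (Int.castAddHom (ZMod n)).toMultiplicative :=
    MonoidHom.ext_mint (by simpa using h)
  ext x
  obtain ⟨a, rfl⟩ := ZMod.intCast_surjective x
  simpa using DFunLike.congr_fun hint (ofAdd a)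

def zmodPowersHom {G : Type*} [Group G] {n : ℕ} (x : G) (hx : x ^ n = 1) :
    Multiplicative (ZMod n) →* G :=
  AddMonoidHom.toMultiplicativeLeft <|
    ZMod.lift n ⟨zmultiplesHom (Additive G) (Additive.ofMul x), by
      rw [zmultiplesHom_apply, natCast_zsmul, ← ofMul_pow, hx, ofMul_one]⟩

@[simp]
theorem zmodPowersHom_ofAdd_one {G : Type*} [Group G] {n : ℕ} (x : G) (hx : x ^ n = 1) :
    zmodPowersHom x hx (ofAdd 1) = x := by
  rw [← Int.cast_one (R := ZMod n)]
  simp only [zmodPowersHom, AddMonoidHom.toMultiplicativeLeft_apply_apply, toAdd_ofAdd,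
    ZMod.lift_coe, zmultiplesHom_apply, one_zsmul, toMul_ofMul]

theorem map_altWord_two_mul {V : Type} {M : Type*} [Monoid M] (F : FreeGroup V →* M) (s t : V) :
    ∀ n : ℕ, F (altWord s t (2 * n)) = (F (.of s) * F (.of t)) ^ n
  | 0 => by rw [pow_zero]; exact map_one F
  | n + 1 => by
    rw [pow_succ', ← map_altWord_two_mul F s t n, ← map_mul, ← map_mul, mul_assoc]
    rfl

section DihedralArtin

open PresentedGroup Coprod

variable (k : ℕ)

local notation "A₂ₖ" => ArtinGroup (dihedralLabel (2 * k))
local notation "Gₖ" => Coprod (Multiplicative (ZMod k)) (Multiplicative ℤ)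

theorem dihedralArtin_braid : ((of true * of false) ^ k : A₂ₖ) = (of false * of true) ^ k := by
  rcases Nat.eq_zero_or_pos k with rfl | hk
  · simp
  have hrel := one_of_mem (rels := artinRels (dihedralLabel (2 * k)))
    (x := altWord true false (2 * k) * (altWord false true (2 * k))⁻¹)
    ⟨true, false, by simp [dihedralLabel]; omega, rfl⟩
  rwa [map_mul, map_inv, mul_inv_eq_one, map_altWord_two_mul, map_altWord_two_mul] at hrel

def garside : A₂ₖ := (of true * of false) ^ k

theorem garside_mem_center : garside k ∈ Subgroup.center A₂ₖ := by
  have hgen : ∀ b, (of b : A₂ₖ) ∈ Subgroup.centralizer {garside k}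
    | true => by
      rw [Subgroup.mem_centralizer_singleton_iff, garside]
      nth_rewrite 1 [dihedralArtin_braid]
      exact (mul_pow_mul _ _ k).symm
    | false => by
      rw [Subgroup.mem_centralizer_singleton_iff, garside]
      nth_rewrite 2 [dihedralArtin_braid]
      exact (mul_pow_mul _ _ k).symm
  exact Subgroup.mem_center_iff.2 fun g =>
    Subgroup.mem_centralizer_singleton_iff.1 (generated_by _ _ hgen g)

theorem inl_ofAdd_one_pow : (inl (ofAdd (1 : ZMod k)) : Gₖ) ^ k = 1 := by
  rw [← map_pow, ← ofAdd_nsmul, nsmul_one, ZMod.natCast_self, ofAdd_zero, map_one]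

/-- With `a = inl (ofAdd 1)` and `b = inr (ofAdd 1)`: `s ↦ b` and `t ↦ a b⁻¹`, so that
`ts ↦ a` and `st ↦ b a b⁻¹`; both sides of the braid relation go to `1`. -/
def dihedralArtinToCoprod : A₂ₖ →* Gₖ :=
  toGroup (f := fun b => cond b (inr (ofAdd 1)) (inl (ofAdd 1) * (inr (ofAdd 1))⁻¹)) <| by
    rintro r ⟨a, b, hab, rfl⟩
    cases a <;> cases b <;>
      simp [dihedralLabel, map_altWord_two_mul, ← mul_assoc, conj_pow, inl_ofAdd_one_pow]
        at hab ⊢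

@[simp]
theorem dihedralArtinToCoprod_of_true :
    dihedralArtinToCoprod k (of true) = inr (ofAdd 1) :=
  toGroup.of _

@[simp]
theorem dihedralArtinToCoprod_of_false :
    dihedralArtinToCoprod k (of false) = inl (ofAdd 1) * (inr (ofAdd 1))⁻¹ :=
  toGroup.of _

theorem garside_mem_ker : garside k ∈ (dihedralArtinToCoprod k).ker := by
  simp [garside, ← mul_assoc, conj_pow, inl_ofAdd_one_pow]

local notation "Nₖ" => Subgroup.normalClosure {garside k}

theorem mk_garside_eq_one : (QuotientGroup.mk (garside k) : A₂ₖ ⧸ Nₖ) = 1 :=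
  (QuotientGroup.eq_one_iff _).2 (Subgroup.subset_normalClosure rfl)

def coprodToQuotientGarside : Gₖ →* A₂ₖ ⧸ Nₖ :=
  Coprod.lift
    (zmodPowersHom (QuotientGroup.mk (of false * of true)) <| by
      rw [← QuotientGroup.mk_pow, ← dihedralArtin_braid, ← garside, mk_garside_eq_one])
    (zpowersHom _ (QuotientGroup.mk (of true)))

def quotientGarsideEquiv : A₂ₖ ⧸ Nₖ ≃* Gₖ :=
  MonoidHom.toMulEquiv
    (QuotientGroup.lift _ (dihedralArtinToCoprod k) <|
      Subgroup.normalClosure_le_normal (Set.singleton_subset_iff.2 (garside_mem_ker k)))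
    (coprodToQuotientGarside k)
    (QuotientGroup.monoidHom_ext _ <| PresentedGroup.ext fun b => by
      cases b <;> simp [coprodToQuotientGarside])
    (Coprod.hom_ext (MonoidHom.ext_mzmod (by simp [coprodToQuotientGarside]))
      (MonoidHom.ext_mint (by simp [coprodToQuotientGarside])))

theorem center_dihedralArtin_eq_normalClosure (hk : k ≠ 1) : Subgroup.center A₂ₖ = Nₖ := by
  have : Nontrivial (ZMod k) := ZMod.nontrivial_iff.2 hk
  exact Subgroup.center_eq_of_le_of_center_quotient_eq_bot
    (Subgroup.normalClosure_le_normal (Set.singleton_subset_iff.2 (garside_mem_center k)))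
    (Subgroup.center_eq_bot_of_mulEquiv (quotientGarsideEquiv k) Coprod.center_eq_bot)

end DihedralArtin

/-- For even m ≥ 4, the central quotient of the dihedral Artin–Tits
group A_m is isomorphic to ℤ/(m/2)ℤ * ℤ. -/
theorem stmt_9 (m : ℕ) (hm : 4 ≤ m) (heven : Even m) :
    Nonempty ((ArtinGroup (dihedralLabel m) ⧸
        Subgroup.center (ArtinGroup (dihedralLabel m))) ≃*
      Monoid.Coprod (Multiplicative (ZMod (m / 2))) (Multiplicative ℤ)) := by
  obtain ⟨k, rfl⟩ := heven
  rw [← two_mul, Nat.mul_div_cancel_left k two_pos]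
  have hcenter := center_dihedralArtin_eq_normalClosure k (by omega)
  exact ⟨(QuotientGroup.quotientMulEquivOfEq hcenter).trans (quotientGarsideEquiv k)⟩
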